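/- Any f-frequent temporal graph on n ≥ 2 vertices with connected underlying graph admits, from any starting vertex, a temporal walk exploring it whose length is at most f(2n − 3), provided the lifetime is at least f(2n−3). Moreover the minimum-weight spanning tree of the frequency-weighted underlying graph has weight at most f(n − 1). -/

import Mathlib

/-!
Growing a closed walk by detours `x → y → x` along an edge leaving its visited set gives, in a
connected graph on `n` vertices, a closed walk through every vertex of length at most `2(n - 1)`;
dropping its last edge still visits every vertex, with at most `2n - 3` steps. In an
`f`-frequent graph the `i`-th edge is active somewhere in the window `(i f, (i + 1) f]`, which
schedules the walk by time `f(2n - 3)`. Every edge has frequency at most `f` and a spanning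
tree has `n - 1` edges.
-/

/-- A temporal graph on vertex type `V`: timesteps `1, …, T`, with `active t e`
meaning the undirected edge `e` is active at timestep `t`. -/
structure TemporalGraph (V : Type) where
  T : ℕ
  active : ℕ → Sym2 V → Prop

namespace TemporalGraph

variable {V : Type}

/-- Edge `e` has frequency at most `f`: it is active at least once in every
window of `f` consecutive timesteps within `[1, T]`. -/
def FreqLE (G : TemporalGraph V) (e : Sym2 V) (f : ℕ) : Prop :=
  0 < f ∧ ∀ t, 1 ≤ t → t + f ≤ G.T + 1 → ∃ s ∈ Finset.Ico t (t + f), G.active s e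

/-- The frequency of an edge: the least `f` such that `e` is active at least
once in every `f` consecutive timesteps. -/
noncomputable def freq (G : TemporalGraph V) (e : Sym2 V) : ℕ :=
  sInf {f | G.FreqLE e f}

/-- Edge `e` is `r`-regular. -/
def Regular (G : TemporalGraph V) (e : Sym2 V) (r : ℕ) : Prop :=
  0 < r ∧ ∀ t, r + 1 ≤ t → t + r ≤ G.T →
    ((G.active (t - r) e ↔ G.active t e) ∧ (G.active t e ↔ G.active (t + r) e))

/-- The underlying (static) graph of a temporal graph. -/
def underlying (G : TemporalGraph V) : SimpleGraph V where
  Adj u v := u ≠ v ∧ ∃ t ∈ Finset.Icc 1 G.T, G.active t s(u, v)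
  symm := by
    constructor
    intro u v h
    refine ⟨h.1.symm, ?_⟩
    rw [Sym2.eq_swap]
    exact h.2
  loopless := ⟨fun v h => h.1 rfl⟩

/-- A temporal walk starting at `start`, given by vertices `vs 0, …, vs m` and
strictly increasing timesteps `ts 0 < … < ts (m-1)`, each step using an edge
active at its timestep. -/
structure TWalk (G : TemporalGraph V) (start : V) where
  m : ℕ
  vs : Fin (m + 1) → V
  ts : Fin m → ℕ
  start_eq : vs 0 = start
  mono : StrictMono ts
  time_ge : ∀ i, 1 ≤ ts i
  time_le : ∀ i, ts i ≤ G.T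
  steps : ∀ i : Fin m, G.active (ts i) s(vs i.castSucc, vs i.succ)

/-- A temporal walk explores the graph if every vertex is visited. -/
def TWalk.Explores {G : TemporalGraph V} {start : V} (w : G.TWalk start) : Prop :=
  Function.Surjective w.vs

/-- The length of a temporal walk: its final timestep. -/
def TWalk.length {G : TemporalGraph V} {start : V} (w : G.TWalk start) : ℕ :=
  Finset.univ.sup w.ts

end TemporalGraph

namespace SimpleGraph

variable {V : Type*} {G : SimpleGraph V}

open Finset

lemma Walk.exists_detour [DecidableEq V] {u w x y : V} (p : G.Walk u w) (hx : x ∈ p.support)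
    (h : G.Adj x y) :
    ∃ q : G.Walk u w, q.length = p.length + 2 ∧
      q.support.toFinset = insert y p.support.toFinset := by
  refine ⟨(p.takeUntil x hx).append (.cons h (.cons h.symm (p.dropUntil x hx))), ?_, ?_⟩
  · conv_rhs => rw [← p.take_spec hx]
    simp only [Walk.length_append, Walk.length_cons]
    omega
  · ext z
    simp [Walk.support_append, ← Walk.mem_support_append_iff, p.take_spec hx]

lemma Connected.exists_closed_walk_covering_of_length_le [Fintype V] [DecidableEq V]
    (hG : G.Connected) {v : V} (p : G.Walk v v) (hp : p.length + 2 ≤ 2 * #p.support.toFinset) :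
    ∃ q : G.Walk v v, (∀ x, x ∈ q.support) ∧ q.length + 2 ≤ 2 * Fintype.card V := by
  by_cases hcov : ∀ x, x ∈ p.support
  · exact ⟨p, hcov, hp.trans (Nat.mul_le_mul_left 2 (card_le_univ _))⟩
  obtain ⟨y, hy⟩ := not_forall.mp hcov
  obtain ⟨r⟩ := hG.preconnected v y
  obtain ⟨d, -, hd_in, hd_out⟩ :=
    r.exists_boundary_dart {x | x ∈ p.support} p.start_mem_support hy
  obtain ⟨q, hq_len, hq_supp⟩ := p.exists_detour hd_in d.adj
  have hcard : #q.support.toFinset = #p.support.toFinset + 1 := by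
    rw [hq_supp, card_insert_of_notMem (by simpa using hd_out)]
  exact hG.exists_closed_walk_covering_of_length_le q (by omega)
termination_by Fintype.card V - #p.support.toFinset
decreasing_by
  have := card_le_univ q.support.toFinset
  omega

lemma Connected.exists_closed_walk_covering [Fintype V] (hG : G.Connected) (v : V) :
    ∃ p : G.Walk v v, (∀ x, x ∈ p.support) ∧ p.length + 2 ≤ 2 * Fintype.card V := by
  classical
  exact hG.exists_closed_walk_covering_of_length_le .nil (by simp)

lemma Connected.exists_walk_covering [Fintype V] (hG : G.Connected) (hV : 2 ≤ Fintype.card V)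
    (v : V) : ∃ (w : V) (p : G.Walk v w), (∀ x, x ∈ p.support) ∧
      p.length ≤ 2 * Fintype.card V - 3 := by
  obtain ⟨q, hq_cov, hq_len⟩ := hG.exists_closed_walk_covering v
  have hq : ¬q.Nil := by
    obtain ⟨x, hx⟩ := Fintype.exists_ne_of_one_lt_card hV v
    intro hnil
    simpa [hnil.eq_nil, hx] using hq_cov x
  refine ⟨_, q.dropLast, fun x => ?_, by rw [Walk.length_dropLast]; omega⟩
  have hx := q.support_dropLast_concat hq ▸ hq_cov x
  rcases List.mem_append.mp hx with hx | hx
  · exact hx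
  · exact List.mem_singleton.mp hx ▸ q.dropLast.start_mem_support

lemma IsTree.finsum_edgeSet_le [Fintype V] {T : SimpleGraph V} (hT : T.IsTree)
    {w : Sym2 V → ℕ} {c : ℕ} (hw : ∀ e ∈ T.edgeSet, w e ≤ c) :
    ∑ᶠ e ∈ T.edgeSet, w e ≤ c * (Fintype.card V - 1) := by
  classical
  have hcard := hT.card_edgeFinset
  rw [← coe_edgeFinset, finsum_mem_coe_finset]
  calc ∑ e ∈ T.edgeFinset, w e ≤ #T.edgeFinset * c :=
        sum_le_card_nsmul _ _ c fun e he => hw e (mem_edgeFinset.mp he)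
    _ = c * (Fintype.card V - 1) := by rw [mul_comm]; congr; omega

end SimpleGraph

namespace TemporalGraph

variable {V : Type} {G : TemporalGraph V} {e : Sym2 V} {f : ℕ}

lemma freq_le_of_freqLE (h : G.FreqLE e f) : G.freq e ≤ f := Nat.sInf_le h

lemma FreqLE.exists_active_mem_Ioc (h : G.FreqLE e f) {i : ℕ} (hi : (i + 1) * f ≤ G.T) :
    ∃ s ∈ Set.Ioc (i * f) ((i + 1) * f), G.active s e := by
  obtain ⟨s, hs, hact⟩ := h.2 (i * f + 1) (by omega) (by rw [add_mul] at hi; omega)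
  rw [Finset.mem_Ico] at hs
  exact ⟨s, ⟨by omega, by rw [add_mul]; omega⟩, hact⟩

lemma exists_tWalk_of_walk (hf : ∀ u v, G.underlying.Adj u v → G.FreqLE s(u, v) f)
    {u w : V} (p : G.underlying.Walk u w) (hT : f * p.length ≤ G.T) :
    ∃ tw : G.TWalk u, (∀ x ∈ p.support, x ∈ Set.range tw.vs) ∧
      tw.length ≤ f * p.length := by
  have hstep : ∀ i : Fin p.length, ∃ s ∈ Set.Ioc (i * f) ((i + 1) * f),
      G.active s s(p.getVert i, p.getVert (i + 1)) := fun i =>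
    (hf _ _ (p.adj_getVert_succ i.2)).exists_active_mem_Ioc
      (by rw [mul_comm]; exact (Nat.mul_le_mul_left f i.2).trans hT)
  choose ts hts_mem hts_active using hstep
  have hts_le : ∀ i, ts i ≤ f * p.length := fun i =>
    (hts_mem i).2.trans (by rw [mul_comm]; exact Nat.mul_le_mul_left f i.2)
  refine ⟨⟨p.length, fun i => p.getVert i, ts, by simp, fun i j hij => ?_,
    fun i => Nat.one_le_iff_ne_zero.mpr (hts_mem i).1.ne_bot, fun i => (hts_le i).trans hT,
    fun i => by simpa using hts_active i⟩, fun x hx => ?_, Finset.sup_le fun i _ => hts_le i⟩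
  · calc ts i ≤ (i + 1) * f := (hts_mem i).2
      _ ≤ j * f := Nat.mul_le_mul_right f hij
      _ < ts j := (hts_mem j).1
  · obtain ⟨k, rfl, hk⟩ := SimpleGraph.Walk.mem_support_iff_exists_getVert.mp hx
    exact ⟨⟨k, Nat.lt_succ_of_le hk⟩, rfl⟩

end TemporalGraph

/-- any `f`-frequent temporal graph on `n ≥ 2` vertices with
connected underlying graph and lifetime at least `f(2n-3)` can be explored from
any starting vertex in at most `f(2n - 3)` timesteps; moreover the
frequency-weighted underlying graph has a spanning tree of weight at most
`f(n - 1)` (hence so does the minimum-weight spanning tree). -/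
theorem explore_f_frequent {V : Type} [Fintype V] (G : TemporalGraph V) (f n : ℕ)
    (hn : n = Fintype.card V) (h2 : 2 ≤ n)
    (hconn : G.underlying.Connected)
    (hf : ∀ u v : V, G.underlying.Adj u v → G.FreqLE s(u, v) f)
    (hT : f * (2 * n - 3) ≤ G.T) :
    (∀ v : V, ∃ w : G.TWalk v, w.Explores ∧ w.length ≤ f * (2 * n - 3)) ∧
    (∃ T' : SimpleGraph V, T' ≤ G.underlying ∧ T'.IsTree ∧
      (∑ᶠ e ∈ T'.edgeSet, G.freq e) ≤ f * (n - 1)) := by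
  subst hn
  refine ⟨fun v => ?_, ?_⟩
  · obtain ⟨_, p, hp_cov, hp_len⟩ := hconn.exists_walk_covering h2 v
    have hp_len' : f * p.length ≤ f * (2 * Fintype.card V - 3) := Nat.mul_le_mul_left f hp_len
    obtain ⟨tw, htw_cov, htw_len⟩ := TemporalGraph.exists_tWalk_of_walk hf p (hp_len'.trans hT)
    exact ⟨tw, fun x => htw_cov x (hp_cov x), htw_len.trans hp_len'⟩
  · obtain ⟨T', hle, hT'⟩ := hconn.exists_isTree_le
    refine ⟨T', hle, hT', hT'.finsum_edgeSet_le fun e he => ?_⟩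
    induction e with
    | h u v => exact TemporalGraph.freq_le_of_freqLE (hf u v (hle he))
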